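/- arXiv:1802.08334 — 5 statements merged into one kernel-verified Lean document; each statement's English description precedes it below -/
import Mathlib

section
/- Let Z ~ N(0, σ²) be a centered Gaussian with variance σ² > 0. Then for every real t, P[|t + Z| ≥ σ] ≥ P[|Z| ≥ σ] ≥ 3/10. -/
open MeasureTheory ProbabilityTheory Real
open scoped NNReal

/-!
With `φ` the density of `Z`, `P[|t + Z| ≥ σ] = 1 - ∫_{-σ-t}^{σ-t} φ`. For any density that
decreases in `|x|`, a window of fixed width catches the most mass when centred at `0`: moving
`[-σ, σ]` by `t ≥ 0` to the left trades `[σ - t, σ]` for its translate by `-2σ`, whose points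
are all farther from the origin. By scaling, `P[|Z| ≥ σ] = P[|N(0,1)| ≥ 1]`, and
`e^{-y} ≤ 1 - y + y²/2` bounds `∫_{-1}^{1} φ` by `103 / (60 √(2π)) < 7/10`.
-/

section SymmetricDecreasing

variable {f : ℝ → ℝ} {r : ℝ}

lemma integral_translate_le_integral_centered_of_nonneg
    (hf : ∀ ⦃a b : ℝ⦄, |a| ≤ |b| → f b ≤ f a) (hfi : Integrable f) (hr : 0 ≤ r)
    {t : ℝ} (ht : 0 ≤ t) :
    ∫ x in (-r - t)..(r - t), f x ≤ ∫ x in (-r)..r, f x := by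
  have hsplit : (∫ x in (-r - t)..(r - t), f x) - ∫ x in (-r)..r, f x
      = (∫ x in (-r - t)..(-r), f x) - ∫ x in (r - t)..r, f x :=
    intervalIntegral.integral_interval_sub_interval_comm hfi.intervalIntegrable
      hfi.intervalIntegrable hfi.intervalIntegrable
  have htranslate : ∫ x in (-r - t)..(-r), f x = ∫ x in (r - t)..r, f (x - 2 * r) := by
    rw [intervalIntegral.integral_comp_sub_right]
    congr 1 <;> ring
  have hcompare : ∫ x in (r - t)..r, f (x - 2 * r) ≤ ∫ x in (r - t)..r, f x := by
    refine intervalIntegral.integral_mono_on (by linarith)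
      (hfi.comp_sub_right _).intervalIntegrable hfi.intervalIntegrable fun x hx => hf ?_
    rw [abs_sub_comm]
    exact abs_le_abs (by linarith [hx.2]) (by linarith)
  linarith

-- Anderson's inequality in dimension one.
lemma integral_translate_le_integral_centered (hf : ∀ ⦃a b : ℝ⦄, |a| ≤ |b| → f b ≤ f a)
    (hfi : Integrable f) (hr : 0 ≤ r) (t : ℝ) :
    ∫ x in (-r - t)..(r - t), f x ≤ ∫ x in (-r)..r, f x := by
  wlog ht : 0 ≤ t generalizing t
  · have heven : ∀ x, f (-x) = f x := fun x =>
      le_antisymm (hf (abs_neg x).ge) (hf (abs_neg x).le)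
    have hreflect : ∫ x in (-r - t)..(r - t), f x = ∫ x in (-r - -t)..(r - -t), f x := calc
      _ = ∫ x in (-r - t)..(r - t), f (-x) := by simp only [heven]
      _ = ∫ x in -(r - t)..-(-r - t), f x := intervalIntegral.integral_comp_neg f
      _ = _ := by congr 1 <;> ring
    exact hreflect ▸ this (-t) (by linarith)
  exact integral_translate_le_integral_centered_of_nonneg hf hfi hr ht

end SymmetricDecreasing

lemma gaussianPDFReal_zero_le_of_abs_le (v : ℝ≥0) {a b : ℝ} (h : |a| ≤ |b|) :
    gaussianPDFReal 0 v b ≤ gaussianPDFReal 0 v a := by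
  simp only [gaussianPDFReal, sub_zero]
  gcongr ?_ * rexp (-?_ / _)
  exact sq_le_sq.mpr h

lemma gaussianReal_real_Ioo (m : ℝ) {v : ℝ≥0} (hv : v ≠ 0) {a b : ℝ} (hab : a ≤ b) :
    (gaussianReal m v).real (Set.Ioo a b) = ∫ x in a..b, gaussianPDFReal m v x := by
  rw [measureReal_def, gaussianReal_apply_eq_integral m hv, ENNReal.toReal_ofReal
      (setIntegral_nonneg measurableSet_Ioo fun x _ => gaussianPDFReal_nonneg m v x),
    intervalIntegral.integral_of_le hab, integral_Ioc_eq_integral_Ioo]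

lemma setOf_le_abs_add_eq_compl (r t : ℝ) :
    {z : ℝ | r ≤ |t + z|} = (Set.Ioo (-r - t) (r - t))ᶜ := by
  ext z
  simp only [Set.mem_ofPred_eq, Set.mem_compl_iff, Set.mem_Ioo, ← not_lt, abs_lt]
  constructor <;> rintro h ⟨h₁, h₂⟩ <;> exact h ⟨by linarith, by linarith⟩

lemma gaussianReal_real_le_abs_add {v : ℝ≥0} (hv : v ≠ 0) {r : ℝ} (hr : 0 ≤ r) (t : ℝ) :
    (gaussianReal 0 v).real {z : ℝ | r ≤ |t + z|}
      = 1 - ∫ x in (-r - t)..(r - t), gaussianPDFReal 0 v x := by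
  rw [setOf_le_abs_add_eq_compl, probReal_compl_eq_one_sub measurableSet_Ioo,
    gaussianReal_real_Ioo 0 hv (by linarith)]

lemma gaussianReal_real_le_abs {v : ℝ≥0} (hv : v ≠ 0) {r : ℝ} (hr : 0 ≤ r) :
    (gaussianReal 0 v).real {z : ℝ | r ≤ |z|} = 1 - ∫ x in (-r)..r, gaussianPDFReal 0 v x := by
  simpa using gaussianReal_real_le_abs_add hv hr 0

lemma gaussianReal_setOf_le_abs_eq_std {σ : ℝ} (hσ : 0 < σ) :
    gaussianReal 0 ⟨σ ^ 2, sq_nonneg σ⟩ {z : ℝ | σ ≤ |z|}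
      = gaussianReal 0 1 {z : ℝ | 1 ≤ |z|} := by
  have hmap : (gaussianReal 0 1).map (σ * ·) = gaussianReal 0 ⟨σ ^ 2, sq_nonneg σ⟩ := by
    have h := gaussianReal_map_const_mul (μ := 0) (v := 1) σ
    rwa [mul_zero, mul_one] at h
  rw [← hmap, Measure.map_apply (by fun_prop) (measurableSet_le (by fun_prop) (by fun_prop))]
  congr 1
  ext z
  simp [abs_mul, abs_of_pos hσ, hσ]

lemma exp_neg_le_quadratic {y : ℝ} (hy : 0 ≤ y) : rexp (-y) ≤ 1 - y + y ^ 2 / 2 := by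
  rw [exp_neg, inv_le_iff_one_le_mul₀ (exp_pos y)]
  calc (1 : ℝ) ≤ (1 - y + y ^ 2 / 2) * (1 + y + y ^ 2 / 2) := by nlinarith [sq_nonneg (y ^ 2)]
    _ ≤ (1 - y + y ^ 2 / 2) * rexp y := by
      gcongr
      · nlinarith [sq_nonneg (y - 1)]
      · exact quadratic_le_exp_of_nonneg hy

lemma integral_taylor_four_exp_neg_sq_div_two :
    ∫ x in (-1 : ℝ)..1, (1 - x ^ 2 / 2 + x ^ 4 / 8) = 103 / 60 := by
  have hderiv (x : ℝ) :
      HasDerivAt (fun x => x - x ^ 3 / 6 + x ^ 5 / 40) (1 - x ^ 2 / 2 + x ^ 4 / 8) x :=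
    (((hasDerivAt_id' x).fun_sub ((hasDerivAt_pow 3 x).div_const 6)).fun_add
      ((hasDerivAt_pow 5 x).div_const 40)).congr_deriv (by push_cast; ring)
  rw [intervalIntegral.integral_eq_sub_of_hasDerivAt (fun x _ => hderiv x)
    (Continuous.intervalIntegrable (by fun_prop) _ _)]
  norm_num

lemma integral_gaussianPDFReal_zero_one_le :
    ∫ x in (-1 : ℝ)..1, gaussianPDFReal 0 1 x ≤ 7 / 10 := by
  have hpdf (x : ℝ) : gaussianPDFReal 0 1 x ≤ (√(2 * π))⁻¹ * (1 - x ^ 2 / 2 + x ^ 4 / 8) := by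
    have hexp := exp_neg_le_quadratic (div_nonneg (sq_nonneg x) zero_le_two)
    simp only [gaussianPDFReal, sub_zero, NNReal.coe_one, mul_one]
    gcongr
    rw [neg_div]
    exact hexp.trans_eq (by ring)
  have hsqrt : 103 / 42 ≤ √(2 * π) := Real.le_sqrt_of_sq_le (by nlinarith [pi_gt_d2])
  calc ∫ x in (-1 : ℝ)..1, gaussianPDFReal 0 1 x
      ≤ ∫ x in (-1 : ℝ)..1, (√(2 * π))⁻¹ * (1 - x ^ 2 / 2 + x ^ 4 / 8) :=
        intervalIntegral.integral_mono (by norm_num)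
          (integrable_gaussianPDFReal 0 1).intervalIntegrable
          (Continuous.intervalIntegrable (by fun_prop) _ _) hpdf
    _ = (√(2 * π))⁻¹ * (103 / 60) := by
        rw [intervalIntegral.integral_const_mul, integral_taylor_four_exp_neg_sq_div_two]
    _ ≤ 7 / 10 := by
        rw [inv_mul_le_iff₀ (by positivity)]
        linarith

theorem stmt_3 (σ : ℝ) (hσ : 0 < σ) (t : ℝ) :
    (3 : ℝ) / 10 ≤ ((gaussianReal 0 ⟨σ ^ 2, sq_nonneg σ⟩) {z : ℝ | σ ≤ |z|}).toReal ∧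
    ((gaussianReal 0 ⟨σ ^ 2, sq_nonneg σ⟩) {z : ℝ | σ ≤ |z|}).toReal ≤
      ((gaussianReal 0 ⟨σ ^ 2, sq_nonneg σ⟩) {z : ℝ | σ ≤ |t + z|}).toReal := by
  set v : ℝ≥0 := ⟨σ ^ 2, sq_nonneg σ⟩
  have hv : v ≠ 0 := by
    rw [ne_eq, ← NNReal.coe_eq_zero]
    exact pow_ne_zero 2 hσ.ne'
  refine ⟨?_, ?_⟩
  · rw [gaussianReal_setOf_le_abs_eq_std hσ, ← measureReal_def,
      gaussianReal_real_le_abs one_ne_zero zero_le_one]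
    linarith [integral_gaussianPDFReal_zero_one_le]
  · simp only [← measureReal_def]
    rw [gaussianReal_real_le_abs hv hσ.le, gaussianReal_real_le_abs_add hv hσ.le]
    linarith [integral_translate_le_integral_centered
      (fun _ _ => gaussianPDFReal_zero_le_of_abs_le v) (integrable_gaussianPDFReal 0 v) hσ.le t]
end

section
/- Let Q ∈ ℝ^{T×d}, let 0 ≺ Γ_min ⪯ Γ_max be positive definite d × d matrices, and let T be a 1/4-net of the shell S_{Γ_min} = {w : wᵀΓ_min w = 1} in the norm ‖Γ_max^{1/2}(·)‖₂. If inf_{w ∈ T} wᵀ QᵀQ w ≥ 1 and QᵀQ ⪯ Γ_max, then QᵀQ ⪰ Γ_min/2. -/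
/-!
Write `‖x‖_Q = ‖Q x‖₂`, so that `xᵀ QᵀQ x = ‖x‖_Q²`, and `QᵀQ ⪯ Γmax` says `‖x‖_Q ≤ ‖Γmax^{1/2} x‖₂`.
For `w` on the shell pick a net point `v` with `‖Γmax^{1/2} (w - v)‖₂ ≤ ε`; then
`‖w‖_Q ≥ ‖v‖_Q - ‖w - v‖_Q ≥ 1 - ε`, so `wᵀ QᵀQ w ≥ (1 - ε)²` on the shell, and by homogeneity
`QᵀQ ⪰ (1 - ε)² Γmin`. For `ε = 1/4` this is `9/16 ≥ 1/2`.
-/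

open Matrix

/-- `T` is an `ε`-net of the shell `{w : wᵀ Γmin w = 1}` in the norm `‖Γmax^{1/2} ·‖₂`. -/
def IsShellNet {d : ℕ} (Γmin Γmax : Matrix (Fin d) (Fin d) ℝ) (ε : ℝ)
    (T : Finset (Fin d → ℝ)) : Prop :=
  (∀ v ∈ T, v ⬝ᵥ Γmin *ᵥ v = 1) ∧
    ∀ w : Fin d → ℝ, w ⬝ᵥ Γmin *ᵥ w = 1 →
      ∃ v ∈ T, Real.sqrt ((w - v) ⬝ᵥ Γmax *ᵥ (w - v)) ≤ ε

section
variable {m n : Type*} [Fintype m] [Fintype n]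

lemma sq_norm_toLp_mulVec (Q : Matrix m n ℝ) (x : n → ℝ) :
    ‖WithLp.toLp 2 (Q *ᵥ x)‖ ^ 2 = x ⬝ᵥ (Qᵀ * Q) *ᵥ x := by
  rw [← real_inner_self_eq_norm_sq, EuclideanSpace.inner_eq_star_dotProduct, ← mulVec_mulVec,
    dotProduct_mulVec, vecMul_transpose, star_trivial]

lemma norm_toLp_mulVec_le_sqrt {Q : Matrix m n ℝ} {Γ : Matrix n n ℝ}
    (h : (Γ - Qᵀ * Q).PosSemidef) (x : n → ℝ) :
    ‖WithLp.toLp 2 (Q *ᵥ x)‖ ≤ √(x ⬝ᵥ Γ *ᵥ x) := by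
  rw [← Real.sqrt_sq (norm_nonneg _), sq_norm_toLp_mulVec]
  refine Real.sqrt_le_sqrt ?_
  simpa [sub_mulVec, dotProduct_sub, sub_nonneg] using h.dotProduct_mulVec_nonneg x

lemma posSemidef_sub_smul_of_le_on_shell {A Γ : Matrix n n ℝ} (hA : A.IsHermitian)
    (hΓ : Γ.PosDef) {c : ℝ} (h : ∀ w, w ⬝ᵥ Γ *ᵥ w = 1 → c ≤ w ⬝ᵥ A *ᵥ w) :
    (A - c • Γ).PosSemidef := by
  refine posSemidef_iff_dotProduct_mulVec.mpr
    ⟨hA.sub (hΓ.isHermitian.smul (IsSelfAdjoint.all c)), fun x => ?_⟩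
  simp only [star_trivial, sub_mulVec, dotProduct_sub, smul_mulVec, dotProduct_smul, smul_eq_mul,
    sub_nonneg]
  rcases eq_or_ne x 0 with rfl | hx
  · simp
  set q := x ⬝ᵥ Γ *ᵥ x
  have hq : 0 < q := by simpa using hΓ.dotProduct_mulVec_pos hx
  have quad_rescale (M : Matrix n n ℝ) :
      ((√q)⁻¹ • x) ⬝ᵥ M *ᵥ ((√q)⁻¹ • x) = q⁻¹ * (x ⬝ᵥ M *ᵥ x) := by
    rw [mulVec_smul, dotProduct_smul, smul_dotProduct, smul_eq_mul, smul_eq_mul, ← mul_assoc,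
      ← mul_inv, Real.mul_self_sqrt hq.le]
  have hc := h _ (by rw [quad_rescale, inv_mul_cancel₀ hq.ne'])
  rwa [quad_rescale, le_inv_mul_iff₀ hq, mul_comm] at hc

end

namespace IsShellNet

variable {T d : ℕ} {Q : Matrix (Fin T) (Fin d) ℝ} {Γmin Γmax : Matrix (Fin d) (Fin d) ℝ} {ε : ℝ}
  {N : Finset (Fin d → ℝ)}

lemma one_sub_le_norm_toLp_mulVec (hN : IsShellNet Γmin Γmax ε N)
    (hlb : ∀ v ∈ N, 1 ≤ v ⬝ᵥ (Qᵀ * Q) *ᵥ v) (hub : (Γmax - Qᵀ * Q).PosSemidef)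
    {w : Fin d → ℝ} (hw : w ⬝ᵥ Γmin *ᵥ w = 1) :
    1 - ε ≤ ‖WithLp.toLp 2 (Q *ᵥ w)‖ := by
  obtain ⟨v, hvN, hvw⟩ := hN.2 w hw
  have hv : 1 ≤ ‖WithLp.toLp 2 (Q *ᵥ v)‖ :=
    (one_le_sq_iff₀ (norm_nonneg _)).mp (sq_norm_toLp_mulVec Q v ▸ hlb v hvN)
  have hwv : ‖WithLp.toLp 2 (Q *ᵥ (w - v))‖ ≤ ε := (norm_toLp_mulVec_le_sqrt hub _).trans hvw
  have hsub := norm_sub_norm_le (WithLp.toLp 2 (Q *ᵥ v)) (WithLp.toLp 2 (Q *ᵥ w))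
  rw [norm_sub_rev, ← WithLp.toLp_sub, ← mulVec_sub] at hsub
  linarith

lemma posSemidef_transpose_mul_self_sub_smul (hN : IsShellNet Γmin Γmax ε N) (hε : ε ≤ 1)
    (hmin : Γmin.PosDef) (hlb : ∀ v ∈ N, 1 ≤ v ⬝ᵥ (Qᵀ * Q) *ᵥ v)
    (hub : (Γmax - Qᵀ * Q).PosSemidef) :
    (Qᵀ * Q - (1 - ε) ^ 2 • Γmin).PosSemidef := by
  refine posSemidef_sub_smul_of_le_on_shell ?_ hmin fun w hw => ?_
  · simpa using (posSemidef_conjTranspose_mul_self Q).isHermitian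
  rw [← sq_norm_toLp_mulVec]
  exact pow_le_pow_left₀ (sub_nonneg.mpr hε) (hN.one_sub_le_norm_toLp_mulVec hlb hub hw) 2

end IsShellNet

theorem stmt_10_general (T d : ℕ) (Q : Matrix (Fin T) (Fin d) ℝ)
    (Γmin Γmax : Matrix (Fin d) (Fin d) ℝ)
    (hmin : Γmin.PosDef)
    (N : Finset (Fin d → ℝ)) (hN : IsShellNet Γmin Γmax (1 / 4) N)
    (hlb : ∀ v ∈ N, 1 ≤ v ⬝ᵥ (Qᵀ * Q) *ᵥ v)
    (hub : (Γmax - Qᵀ * Q).PosSemidef) :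
    (Qᵀ * Q - (1 / 2 : ℝ) • Γmin).PosSemidef := by
  have h916 := hN.posSemidef_transpose_mul_self_sub_smul (by norm_num) hmin hlb hub
  have hslack := hmin.posSemidef.smul (show (0 : ℝ) ≤ 1 / 16 by norm_num)
  convert h916.add hslack using 1
  module

theorem stmt_10 (T d : ℕ) (Q : Matrix (Fin T) (Fin d) ℝ)
    (Γmin Γmax : Matrix (Fin d) (Fin d) ℝ)
    (hmin : Γmin.PosDef) (hle : (Γmax - Γmin).PosSemidef)
    (N : Finset (Fin d → ℝ)) (hN : IsShellNet Γmin Γmax (1 / 4) N)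
    (hlb : ∀ v ∈ N, 1 ≤ v ⬝ᵥ (Qᵀ * Q) *ᵥ v)
    (hub : (Γmax - Qᵀ * Q).PosSemidef) :
    (Qᵀ * Q - (1 / 2 : ℝ) • Γmin).PosSemidef :=
  stmt_10_general T d Q Γmin Γmax hmin N hN hlb hub
end

section
/- Let Q ∈ ℝ^{n×m} have full column rank, q ∈ ℝⁿ, let 0 ≺ Γ_min ⪯ QᵀQ ⪯ Γ_max, and let T be a 1/4-net of the shell S_{Γ_min} = {w : wᵀΓ_min w = 1} in the norm ‖Γ_max^{1/2}(·)‖₂. Then sup over unit vectors w ∈ S^{m−1} of ⟨Qw, q⟩/‖Qw‖ is at most 2·max_{w ∈ T} ⟨Qw, q⟩/‖Qw‖. -/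
open Matrix

noncomputable def enorm₂ {n : ℕ} (x : Fin n → ℝ) : ℝ := Real.sqrt (∑ i, x i ^ 2)

/-!
Write `f w = ⟪Qw, q⟫ / ‖Qw‖`. It is invariant under positive scaling and odd, so its maximum `S`
on the unit sphere (attained by compactness) is nonnegative and bounds `f` everywhere. Rescale a
maximiser to a point `u` of the shell and take a net point `v` with `‖Q(u - v)‖ ≤ 1/4`. As
`‖Qu‖ ≥ 1`, the unit vectors `Qu/‖Qu‖` and `Qv/‖Qv‖` are within `1/2` of each other, and their
difference is `Qz` for `z = u/‖Qu‖ - v/‖Qv‖`. Hence `S - f v = ⟪Qz, q⟫ ≤ ‖Qz‖ S ≤ S/2`.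
-/

section NormalizedPairing

open scoped InnerProductSpace

theorem norm_inv_norm_smul_sub_inv_norm_smul_le {F : Type*} [NormedAddCommGroup F]
    [NormedSpace ℝ F] {a : F} (ha : a ≠ 0) (b : F) :
    ‖‖a‖⁻¹ • a - ‖b‖⁻¹ • b‖ ≤ 2 * ‖a - b‖ / ‖a‖ := by
  have ha' : 0 < ‖a‖ := norm_pos_iff.2 ha
  have hsplit :
      ‖a‖⁻¹ • a - ‖b‖⁻¹ • b = ‖a‖⁻¹ • ((a - b) + (‖b‖ - ‖a‖) • (‖b‖⁻¹ • b)) := by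
    rcases eq_or_ne b 0 with rfl | hb
    · simp
    · have hb' : ‖b‖ ≠ 0 := norm_ne_zero_iff.2 hb
      match_scalars <;> field_simp
      ring
  have hunit : ‖‖b‖⁻¹ • b‖ ≤ 1 := by
    rcases eq_or_ne b 0 with rfl | hb
    · simp
    · exact (norm_smul_inv_norm hb).le
  rw [hsplit, norm_smul, norm_inv, norm_norm, inv_mul_eq_div]
  gcongr
  calc ‖a - b + (‖b‖ - ‖a‖) • (‖b‖⁻¹ • b)‖
      ≤ ‖a - b‖ + |‖b‖ - ‖a‖| * ‖‖b‖⁻¹ • b‖ := by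
        grw [norm_add_le, norm_smul, Real.norm_eq_abs]
    _ ≤ ‖a - b‖ + ‖a - b‖ * 1 := by
        gcongr
        rw [abs_sub_comm]
        exact abs_norm_sub_norm_le a b
    _ = 2 * ‖a - b‖ := by ring

variable {E F : Type*} [NormedAddCommGroup E] [NormedSpace ℝ E]
  [NormedAddCommGroup F] [InnerProductSpace ℝ F]

noncomputable def normalizedPairing (L : E →ₗ[ℝ] F) (y : F) (x : E) : ℝ :=
  ⟪L x, y⟫_ℝ / ‖L x‖

variable (L : E →ₗ[ℝ] F) (y : F)

@[simp]
theorem normalizedPairing_zero : normalizedPairing L y 0 = 0 := by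
  simp [normalizedPairing]

theorem normalizedPairing_smul_of_pos {c : ℝ} (hc : 0 < c) (x : E) :
    normalizedPairing L y (c • x) = normalizedPairing L y x := by
  simp only [normalizedPairing, map_smul, real_inner_smul_left, norm_smul,
    Real.norm_of_nonneg hc.le]
  exact mul_div_mul_left _ _ hc.ne'

theorem normalizedPairing_neg (x : E) :
    normalizedPairing L y (-x) = -normalizedPairing L y x := by
  simp [normalizedPairing, neg_div]

theorem inner_le_norm_mul_of_normalizedPairing_le {S : ℝ}
    (hS : ∀ x, normalizedPairing L y x ≤ S) (x : E) : ⟪L x, y⟫_ℝ ≤ ‖L x‖ * S := by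
  rcases eq_or_ne (L x) 0 with hx | hx
  · simp [hx]
  · have := hS x
    rwa [normalizedPairing, div_le_iff₀ (norm_pos_iff.2 hx), mul_comm] at this

theorem normalizedPairing_le_add_half {S : ℝ} (hS : ∀ x, normalizedPairing L y x ≤ S) {u v : E}
    (hu : 1 ≤ ‖L u‖) (huv : ‖L (u - v)‖ ≤ 1 / 4) :
    normalizedPairing L y u ≤ normalizedPairing L y v + S / 2 := by
  have hS0 : 0 ≤ S := by simpa using hS 0
  have hu0 : L u ≠ 0 := norm_pos_iff.1 (one_pos.trans_le hu)
  set z := ‖L u‖⁻¹ • u - ‖L v‖⁻¹ • v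
  have hLz : L z = ‖L u‖⁻¹ • L u - ‖L v‖⁻¹ • L v := by simp [z]
  have hdiff : normalizedPairing L y u - normalizedPairing L y v = ⟪L z, y⟫_ℝ := by
    simp only [hLz, inner_sub_left, real_inner_smul_left, normalizedPairing, inv_mul_eq_div]
  have hnorm : ‖L z‖ ≤ 1 / 2 := by
    rw [hLz]
    calc _ ≤ 2 * ‖L u - L v‖ / ‖L u‖ := norm_inv_norm_smul_sub_inv_norm_smul_le hu0 _
      _ ≤ 2 * ‖L u - L v‖ := div_le_self (by positivity) hu
      _ ≤ 1 / 2 := by rw [← map_sub]; linarith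
  have hinner : ⟪L z, y⟫_ℝ ≤ S / 2 :=
    calc ⟪L z, y⟫_ℝ ≤ ‖L z‖ * S := inner_le_norm_mul_of_normalizedPairing_le L y hS z
      _ ≤ 1 / 2 * S := by gcongr
      _ = S / 2 := by ring
  linarith

theorem exists_forall_normalizedPairing_le [FiniteDimensional ℝ E] [Nontrivial E]
    (hL : Function.Injective L) :
    ∃ x₀ ≠ 0, ∀ x, normalizedPairing L y x ≤ normalizedPairing L y x₀ := by
  have hcont : ContinuousOn (normalizedPairing L y) (Metric.sphere 0 1) := by
    have hLc := L.continuous_of_finiteDimensional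
    refine (hLc.inner continuous_const).continuousOn.div hLc.norm.continuousOn fun x hx ↦ ?_
    rw [norm_ne_zero_iff, map_ne_zero_iff L hL]
    exact ne_zero_of_mem_unit_sphere ⟨x, hx⟩
  obtain ⟨x₀, hx₀, hmax⟩ := (isCompact_sphere (0 : E) 1).exists_isMaxOn
    (NormedSpace.sphere_nonempty.2 zero_le_one) hcont
  rw [isMaxOn_iff] at hmax
  refine ⟨x₀, ne_zero_of_mem_unit_sphere ⟨x₀, hx₀⟩, fun x ↦ ?_⟩
  rcases eq_or_ne x 0 with rfl | hx
  · have := hmax (-x₀) (by simpa using hx₀)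
    rw [normalizedPairing_neg] at this
    rw [normalizedPairing_zero]
    linarith
  · rw [← normalizedPairing_smul_of_pos L y (inv_pos.2 (norm_pos_iff.2 hx))]
    exact hmax _ (mem_sphere_zero_iff_norm.2 (norm_smul_inv_norm hx))

theorem exists_mem_forall_normalizedPairing_le_two_mul [FiniteDimensional ℝ E] [Nontrivial E]
    {K T : Set E} (hK : ∀ u ∈ K, 1 ≤ ‖L u‖) (hscale : ∀ x ≠ 0, ∃ c : ℝ, 0 < c ∧ c • x ∈ K)
    (hT : ∀ u ∈ K, ∃ v ∈ T, ‖L (u - v)‖ ≤ 1 / 4) :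
    ∃ v ∈ T, ∀ x, normalizedPairing L y x ≤ 2 * normalizedPairing L y v := by
  have hL : Function.Injective L := by
    refine (injective_iff_map_eq_zero L).2 fun x hx ↦ by_contra fun hx0 ↦ ?_
    obtain ⟨c, -, hcx⟩ := hscale x hx0
    have := hK _ hcx
    norm_num [hx] at this
  obtain ⟨x₀, hx₀, hmax⟩ := exists_forall_normalizedPairing_le L y hL
  obtain ⟨c, hc, hu⟩ := hscale x₀ hx₀
  obtain ⟨v, hvT, huv⟩ := hT _ hu
  have hstep := normalizedPairing_le_add_half L y hmax (hK _ hu) huv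
  rw [normalizedPairing_smul_of_pos L y hc] at hstep
  exact ⟨v, hvT, fun x ↦ (hmax x).trans (by linarith)⟩

end NormalizedPairing

namespace Matrix

variable {ι κ : Type*} [Fintype κ]

noncomputable def mulVecEuclidean (Q : Matrix ι κ ℝ) : (κ → ℝ) →ₗ[ℝ] EuclideanSpace ℝ ι :=
  (WithLp.linearEquiv 2 ℝ (ι → ℝ)).symm.toLinearMap ∘ₗ Q.mulVecLin

@[simp]
theorem mulVecEuclidean_apply (Q : Matrix ι κ ℝ) (x : κ → ℝ) :
    Q.mulVecEuclidean x = WithLp.toLp 2 (Q *ᵥ x) := rfl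

theorem norm_mulVecEuclidean_sq [Fintype ι] (Q : Matrix ι κ ℝ) (x : κ → ℝ) :
    ‖Q.mulVecEuclidean x‖ ^ 2 = x ⬝ᵥ (Qᵀ * Q) *ᵥ x := by
  rw [← real_inner_self_eq_norm_sq, mulVecEuclidean_apply, EuclideanSpace.inner_toLp_toLp,
    star_trivial, dotProduct_mulVec, ← vecMul_transpose, vecMul_vecMul, ← dotProduct_mulVec]

theorem dotProduct_mulVec_le_of_posSemidef_sub {A B : Matrix κ κ ℝ} (h : (A - B).PosSemidef)
    (x : κ → ℝ) : x ⬝ᵥ B *ᵥ x ≤ x ⬝ᵥ A *ᵥ x := by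
  have := h.dotProduct_mulVec_nonneg x
  rw [star_trivial, sub_mulVec, dotProduct_sub] at this
  linarith

theorem dotProduct_mulVec_le_norm_mulVecEuclidean_sq [Fintype ι] {Q : Matrix ι κ ℝ}
    {Γ : Matrix κ κ ℝ} (h : (Qᵀ * Q - Γ).PosSemidef) (x : κ → ℝ) :
    x ⬝ᵥ Γ *ᵥ x ≤ ‖Q.mulVecEuclidean x‖ ^ 2 :=
  norm_mulVecEuclidean_sq Q x ▸ dotProduct_mulVec_le_of_posSemidef_sub h x

theorem norm_mulVecEuclidean_le_sqrt [Fintype ι] {Q : Matrix ι κ ℝ} {Γ : Matrix κ κ ℝ}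
    (h : (Γ - Qᵀ * Q).PosSemidef) (x : κ → ℝ) : ‖Q.mulVecEuclidean x‖ ≤ √(x ⬝ᵥ Γ *ᵥ x) :=
  Real.le_sqrt_of_sq_le (norm_mulVecEuclidean_sq Q x ▸ dotProduct_mulVec_le_of_posSemidef_sub h x)

theorem PosDef.exists_pos_smul_dotProduct_mulVec_eq_one {Γ : Matrix κ κ ℝ} (hΓ : Γ.PosDef)
    {x : κ → ℝ} (hx : x ≠ 0) : ∃ c : ℝ, 0 < c ∧ (c • x) ⬝ᵥ Γ *ᵥ (c • x) = 1 := by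
  have hpos : 0 < x ⬝ᵥ Γ *ᵥ x := by simpa using hΓ.dotProduct_mulVec_pos hx
  refine ⟨(√(x ⬝ᵥ Γ *ᵥ x))⁻¹, by positivity, ?_⟩
  rw [mulVec_smul, smul_dotProduct, dotProduct_smul, smul_smul, smul_eq_mul, ← sq,
    inv_pow, Real.sq_sqrt hpos.le, inv_mul_cancel₀ hpos.ne']

end Matrix

theorem enorm₂_eq_norm_toLp {n : ℕ} (x : Fin n → ℝ) : enorm₂ x = ‖WithLp.toLp 2 x‖ := by
  simp [enorm₂, EuclideanSpace.norm_eq]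

theorem normalizedPairing_mulVecEuclidean {n m : ℕ} (Q : Matrix (Fin n) (Fin m) ℝ)
    (q : Fin n → ℝ) (x : Fin m → ℝ) :
    normalizedPairing Q.mulVecEuclidean (WithLp.toLp 2 q) x =
      (Q *ᵥ x) ⬝ᵥ q / enorm₂ (Q *ᵥ x) := by
  rw [normalizedPairing, mulVecEuclidean_apply, EuclideanSpace.inner_toLp_toLp, star_trivial,
    dotProduct_comm, enorm₂_eq_norm_toLp]

theorem stmt_12_general (n m : ℕ) (Q : Matrix (Fin n) (Fin m) ℝ) (q : Fin n → ℝ)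
    (Γmin Γmax : Matrix (Fin m) (Fin m) ℝ) (hmin : Γmin.PosDef)
    (hlb : (Qᵀ * Q - Γmin).PosSemidef) (hub : (Γmax - Qᵀ * Q).PosSemidef)
    (N : Finset (Fin m → ℝ)) (hN : IsShellNet Γmin Γmax (1 / 4) N) :
    ∀ w : Fin m → ℝ, enorm₂ w = 1 →
      ∃ v ∈ N, (Q *ᵥ w) ⬝ᵥ q / enorm₂ (Q *ᵥ w) ≤ 2 * ((Q *ᵥ v) ⬝ᵥ q / enorm₂ (Q *ᵥ v)) := by
  intro w hw
  have : Nontrivial (Fin m → ℝ) := nontrivial_of_ne w 0 (by rintro rfl; simp [enorm₂] at hw)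
  obtain ⟨v, hvN, hv⟩ := exists_mem_forall_normalizedPairing_le_two_mul Q.mulVecEuclidean
    (WithLp.toLp 2 q) (K := {u | u ⬝ᵥ Γmin *ᵥ u = 1}) (T := N)
    (fun u hu ↦ (one_le_sq_iff₀ (norm_nonneg _)).1
      (hu ▸ dotProduct_mulVec_le_norm_mulVecEuclidean_sq hlb u))
    (fun _ ↦ hmin.exists_pos_smul_dotProduct_mulVec_eq_one)
    (fun u hu ↦ (hN.2 u hu).imp fun v ⟨hvN, hv⟩ ↦
      ⟨hvN, (norm_mulVecEuclidean_le_sqrt hub _).trans hv⟩)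
  refine ⟨v, hvN, ?_⟩
  simpa only [normalizedPairing_mulVecEuclidean] using hv w

theorem stmt_12 (n m : ℕ) (Q : Matrix (Fin n) (Fin m) ℝ)
    (hQ : Function.Injective Q.mulVec) (q : Fin n → ℝ)
    (Γmin Γmax : Matrix (Fin m) (Fin m) ℝ) (hmin : Γmin.PosDef)
    (hlb : (Qᵀ * Q - Γmin).PosSemidef) (hub : (Γmax - Qᵀ * Q).PosSemidef)
    (N : Finset (Fin m → ℝ)) (hN : IsShellNet Γmin Γmax (1 / 4) N) :
    ∀ w : Fin m → ℝ, enorm₂ w = 1 →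
      ∃ v ∈ N, (Q *ᵥ w) ⬝ᵥ q / enorm₂ (Q *ᵥ w) ≤ 2 * ((Q *ᵥ v) ⬝ᵥ q / enorm₂ (Q *ᵥ v)) :=
  stmt_12_general n m Q q Γmin Γmax hmin hlb hub N hN
end

section
/- Let {F_t}_{t≥0} be a filtration, let {Z_t}_{t≥1} be adapted to F_t, and let {W_t}_{t≥1} be adapted to F_{t+1} with W_t | F_t mean-zero and σ²-sub-Gaussian (i.e., E[exp(λW_t) | F_t] ≤ exp(σ²λ²/2) for all λ). Then for any positive reals α, β: P[{Σ_{t=1}^T Z_t W_t ≥ α} ∩ {Σ_{t=1}^T Z_t² ≤ β}] ≤ exp(−α²/(2σ²β)). -/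
/-!
With `λ = α / (σ² β)`, the process `exp (Σ_{t ≤ n} (λ Z_t W_t - σ² (λ Z_t)² / 2))` has expectation
at most `1`: conditioning on `F_{n+1}` and applying the sub-Gaussian bound at the
`F_{n+1}`-measurable parameter `λ Z_{n+1}` removes the last factor. On the event in question the
exponent is at least `α² / (2 σ² β)`, so Markov's inequality gives the bound.

The sub-Gaussian hypothesis only concerns deterministic parameters `c`. It passes to an
`m`-measurable parameter `g` first for countably valued `g`, by splitting `Ω` along the level sets
of `g`, and then in general by Fatou's lemma along approximations of `g` rounded toward zero;
rounding toward zero keeps `g_n² ≤ g²`, so no integrability of the right-hand side is needed.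
-/

open MeasureTheory Filter Topology

noncomputable def roundTowardZero (n : ℕ) (x : ℝ) : ℝ :=
  if 0 ≤ x then ⌊x * (n + 1)⌋ / (n + 1) else ⌈x * (n + 1)⌉ / (n + 1)

theorem abs_roundTowardZero_le_and_abs_sub_lt (n : ℕ) (x : ℝ) :
    |roundTowardZero n x| ≤ |x| ∧ |x - roundTowardZero n x| < 1 / (n + 1) := by
  have hn : (0 : ℝ) < n + 1 := by positivity
  have hx : ∀ z : ℤ, x - z / (n + 1) = (x * (n + 1) - z) / (n + 1) := fun z => by
    field_simp
  unfold roundTowardZero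
  split_ifs with h0
  · have := Int.floor_le (x * (n + 1))
    have := Int.lt_floor_add_one (x * (n + 1))
    have : (0 : ℝ) ≤ ⌊x * (n + 1)⌋ := by exact_mod_cast Int.floor_nonneg.2 (by positivity)
    constructor
    · rw [abs_of_nonneg h0, abs_of_nonneg (by positivity), div_le_iff₀ hn]
      linarith
    · rw [hx, abs_div, abs_of_pos hn, div_lt_div_iff_of_pos_right hn, abs_lt]
      constructor <;> linarith
  · have := Int.le_ceil (x * (n + 1))
    have := Int.ceil_lt_add_one (x * (n + 1))
    have : (⌈x * (n + 1)⌉ : ℝ) ≤ 0 := by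
      exact_mod_cast Int.ceil_le.2 (by push_cast; nlinarith)
    constructor
    · rw [abs_of_neg (lt_of_not_ge h0),
        abs_of_nonpos (div_nonpos_of_nonpos_of_nonneg this hn.le), neg_le_neg_iff, le_div_iff₀ hn]
      linarith
    · rw [hx, abs_div, abs_of_pos hn, div_lt_div_iff_of_pos_right hn, abs_lt]
      constructor <;> linarith

theorem tendsto_roundTowardZero (x : ℝ) :
    Tendsto (fun n => roundTowardZero n x) atTop (𝓝 x) := by
  refine tendsto_iff_dist_tendsto_zero.2 <| squeeze_zero (fun _ => dist_nonneg)
    (fun n => ?_) tendsto_one_div_add_atTop_nhds_zero_nat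
  rw [dist_comm, Real.dist_eq]
  exact (abs_roundTowardZero_le_and_abs_sub_lt n x).2.le

theorem measurable_roundTowardZero (n : ℕ) : Measurable (roundTowardZero n) :=
  Measurable.ite measurableSet_Ici (by measurability) (by measurability)

theorem countable_range_roundTowardZero (n : ℕ) :
    (Set.range (roundTowardZero n)).Countable := by
  refine (Set.countable_range fun z : ℤ => (z : ℝ) / (n + 1)).mono ?_
  rintro _ ⟨x, rfl⟩
  unfold roundTowardZero
  split_ifs
  exacts [⟨_, rfl⟩, ⟨_, rfl⟩]

section CondExpBound

variable {Ω : Type*} {m m0 : MeasurableSpace Ω} {μ : Measure Ω} [IsFiniteMeasure μ]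

theorem withDensity_trim_le_smul_of_condExp_le (hm : m ≤ m0) {f : Ω → ℝ} {K : ℝ}
    (hf : Integrable f μ) (hf0 : 0 ≤ᵐ[μ] f) (hfK : μ[f|m] ≤ᵐ[μ] fun _ => K) :
    (μ.withDensity fun ω => ENNReal.ofReal (f ω)).trim hm ≤ ENNReal.ofReal K • μ.trim hm := by
  refine Measure.le_iff.2 fun s hs => ?_
  rw [trim_measurableSet_eq hm hs, Measure.smul_apply, trim_measurableSet_eq hm hs,
    withDensity_apply _ (hm s hs), ← ofReal_integral_eq_lintegral_ofReal hf.restrict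
      (ae_restrict_of_ae hf0), ← setIntegral_condExp hm hf hs, smul_eq_mul]
  calc ENNReal.ofReal (∫ ω in s, μ[f|m] ω ∂μ)
      ≤ ENNReal.ofReal (∫ _ in s, K ∂μ) :=
        ENNReal.ofReal_le_ofReal (setIntegral_mono_ae integrable_condExp.integrableOn
          (integrableOn_const (measure_ne_top μ s)) hfK)
    _ = ENNReal.ofReal K * μ s := by
        rw [setIntegral_const, smul_eq_mul, mul_comm, ENNReal.ofReal_mul' measureReal_nonneg,
          ofReal_measureReal (measure_ne_top μ s)]

theorem lintegral_mul_ofReal_le_of_condExp_le (hm : m ≤ m0) {f : Ω → ℝ} {K : ℝ}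
    (hf : Integrable f μ) (hf0 : 0 ≤ᵐ[μ] f) (hfK : μ[f|m] ≤ᵐ[μ] fun _ => K)
    {F : Ω → ENNReal} (hF : Measurable[m] F) :
    ∫⁻ ω, F ω * ENNReal.ofReal (f ω) ∂μ ≤ ENNReal.ofReal K * ∫⁻ ω, F ω ∂μ := by
  calc ∫⁻ ω, F ω * ENNReal.ofReal (f ω) ∂μ
      = ∫⁻ ω, F ω ∂(μ.withDensity fun ω => ENNReal.ofReal (f ω)).trim hm := by
        rw [lintegral_trim hm hF, lintegral_withDensity_eq_lintegral_mul₀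
          hf.aemeasurable.ennreal_ofReal (hF.mono hm le_rfl).aemeasurable]
        simp only [Pi.mul_apply, mul_comm]
    _ ≤ ∫⁻ ω, F ω ∂(ENNReal.ofReal K • μ.trim hm) :=
        lintegral_mono' (withDensity_trim_le_smul_of_condExp_le hm hf hf0 hfK) le_rfl
    _ = ENNReal.ofReal K * ∫⁻ ω, F ω ∂μ := by
        rw [lintegral_smul_measure, lintegral_trim hm hF, smul_eq_mul]

theorem mul_apply_eq_tsum_indicator {g : Ω → ℝ} (F : Ω → ENNReal) (h : ℝ → Ω → ENNReal)
    (ω : Ω) :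
    F ω * h (g ω) ω = ∑' c : Set.range g, {x | g x = c}.indicator F ω * h c ω := by
  rw [tsum_eq_single ⟨g ω, ω, rfl⟩ fun c hc => ?_]
  · simp
  · have : g ω ≠ c := fun h => hc (Subtype.ext h.symm)
    simp [this]

theorem lintegral_mul_ofReal_le_of_condExp_le_of_countable_range (hm : m ≤ m0)
    {f : ℝ → Ω → ℝ} {K : ℝ → ℝ} (hf : ∀ c, Integrable (f c) μ) (hf0 : ∀ c, 0 ≤ᵐ[μ] f c)
    (hfK : ∀ c, μ[f c|m] ≤ᵐ[μ] fun _ => K c) {F : Ω → ENNReal} (hF : Measurable[m] F)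
    {g : Ω → ℝ} (hg : Measurable[m] g) (hg_count : (Set.range g).Countable) :
    ∫⁻ ω, F ω * ENNReal.ofReal (f (g ω) ω) ∂μ ≤
      ∫⁻ ω, F ω * ENNReal.ofReal (K (g ω)) ∂μ := by
  have := hg_count.to_subtype
  have hFc : ∀ c : ℝ, Measurable[m] ({x | g x = c}.indicator F) := fun c =>
    hF.indicator (hg (MeasurableSet.singleton c))
  simp_rw [mul_apply_eq_tsum_indicator F (fun c ω => ENNReal.ofReal (f c ω)),
    mul_apply_eq_tsum_indicator F (fun c _ => ENNReal.ofReal (K c))]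
  rw [lintegral_tsum fun c => ?_, lintegral_tsum fun c => ?_]
  rotate_left
  · exact ((hFc c).mono hm le_rfl).aemeasurable.mul_const _
  · exact ((hFc c).mono hm le_rfl).aemeasurable.mul (hf c).aemeasurable.ennreal_ofReal
  refine ENNReal.tsum_le_tsum fun c => ?_
  rw [lintegral_mul_const _ ((hFc c).mono hm le_rfl), mul_comm]
  exact lintegral_mul_ofReal_le_of_condExp_le hm (hf c) (hf0 c) (hfK c) (hFc c)

theorem lintegral_mul_exp_mul_le_of_condExp_le (hm : m ≤ m0) {W : Ω → ℝ} {σ : ℝ}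
    (hW : Measurable W) (hint : ∀ c, Integrable (fun ω => Real.exp (c * W ω)) μ)
    (hsub : ∀ c, μ[fun ω => Real.exp (c * W ω)|m] ≤ᵐ[μ]
      fun _ => Real.exp (σ ^ 2 * c ^ 2 / 2))
    {F : Ω → ENNReal} (hF : Measurable[m] F) {g : Ω → ℝ} (hg : Measurable[m] g) :
    ∫⁻ ω, F ω * ENNReal.ofReal (Real.exp (g ω * W ω)) ∂μ ≤
      ∫⁻ ω, F ω * ENNReal.ofReal (Real.exp (σ ^ 2 * g ω ^ 2 / 2)) ∂μ := by
  set g' : ℕ → Ω → ℝ := fun n ω => roundTowardZero n (g ω)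
  have hlim : ∀ ω, Tendsto (fun n => F ω * ENNReal.ofReal (Real.exp (g' n ω * W ω))) atTop
      (𝓝 (F ω * ENNReal.ofReal (Real.exp (g ω * W ω)))) := fun ω =>
    ENNReal.Tendsto.const_mul ((ENNReal.continuous_ofReal.comp Real.continuous_exp).tendsto _
      |>.comp ((tendsto_roundTowardZero (g ω)).mul_const _))
      (Or.inl (ENNReal.ofReal_pos.2 (Real.exp_pos _)).ne')
  have hbound : ∀ n, ∫⁻ ω, F ω * ENNReal.ofReal (Real.exp (g' n ω * W ω)) ∂μ ≤
      ∫⁻ ω, F ω * ENNReal.ofReal (Real.exp (σ ^ 2 * g ω ^ 2 / 2)) ∂μ := by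
    intro n
    refine (lintegral_mul_ofReal_le_of_condExp_le_of_countable_range hm hint
      (fun c => ae_of_all _ fun ω => (Real.exp_pos _).le) hsub hF
      ((measurable_roundTowardZero n).comp hg)
      ((countable_range_roundTowardZero n).mono (Set.range_comp_subset_range _ _))).trans ?_
    refine lintegral_mono fun ω => ?_
    gcongr _ * ENNReal.ofReal (Real.exp (σ ^ 2 * ?_ / 2))
    exact sq_le_sq.2 (abs_roundTowardZero_le_and_abs_sub_lt n (g ω)).1
  calc ∫⁻ ω, F ω * ENNReal.ofReal (Real.exp (g ω * W ω)) ∂μ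
      = ∫⁻ ω, liminf (fun n => F ω * ENNReal.ofReal (Real.exp (g' n ω * W ω))) atTop ∂μ :=
        lintegral_congr fun ω => (hlim ω).liminf_eq.symm
    _ ≤ liminf (fun n => ∫⁻ ω, F ω * ENNReal.ofReal (Real.exp (g' n ω * W ω)) ∂μ) atTop :=
        lintegral_liminf_le fun n => by
          have := (measurable_roundTowardZero n).comp (hg.mono hm le_rfl)
          have := hF.mono hm le_rfl
          fun_prop
    _ ≤ _ := liminf_le_of_frequently_le' (Frequently.of_forall hbound)

end CondExpBound

theorem ENNReal.ofReal_exp_add (a b : ℝ) :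
    ENNReal.ofReal (Real.exp (a + b)) =
      ENNReal.ofReal (Real.exp a) * ENNReal.ofReal (Real.exp b) := by
  rw [Real.exp_add, ENNReal.ofReal_mul (Real.exp_pos a).le]

theorem lintegral_exp_sum_mul_sub_le_one {Ω : Type*} {m0 : MeasurableSpace Ω} {μ : Measure Ω}
    [IsProbabilityMeasure μ] (F : Filtration ℕ m0) {g W : ℕ → Ω → ℝ} {σ : ℝ}
    (hg : Adapted F g) (hW : ∀ t, StronglyMeasurable[F (t + 1)] (W t))
    (hint : ∀ t c, Integrable (fun ω => Real.exp (c * W t ω)) μ)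
    (hsub : ∀ t c, μ[fun ω => Real.exp (c * W t ω)|F t] ≤ᵐ[μ]
      fun _ => Real.exp (σ ^ 2 * c ^ 2 / 2)) (n : ℕ) :
    ∫⁻ ω, ENNReal.ofReal (Real.exp (∑ t ∈ Finset.Icc 1 n,
      (g t ω * W t ω - σ ^ 2 * g t ω ^ 2 / 2))) ∂μ ≤ 1 := by
  induction n with
  | zero => simp
  | succ n ih =>
    set S : Ω → ℝ := fun ω =>
      ∑ t ∈ Finset.Icc 1 n, (g t ω * W t ω - σ ^ 2 * g t ω ^ 2 / 2)
    have hS : Measurable[F (n + 1)] S := Finset.measurable_sum _ fun t ht => by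
      have ht := (Finset.mem_Icc.1 ht).2
      have := (hg t).mono (F.mono (show t ≤ n + 1 by omega)) le_rfl
      have := ((hW t).mono (F.mono (show t + 1 ≤ n + 1 by omega))).measurable
      fun_prop
    set G : Ω → ENNReal := fun ω =>
      ENNReal.ofReal (Real.exp (S ω)) *
        ENNReal.ofReal (Real.exp (-(σ ^ 2 * g (n + 1) ω ^ 2 / 2)))
    have hG : Measurable[F (n + 1)] G := by
      have := hg (n + 1)
      fun_prop
    calc ∫⁻ ω, ENNReal.ofReal (Real.exp (∑ t ∈ Finset.Icc 1 (n + 1),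
          (g t ω * W t ω - σ ^ 2 * g t ω ^ 2 / 2))) ∂μ
        = ∫⁻ ω, G ω * ENNReal.ofReal (Real.exp (g (n + 1) ω * W (n + 1) ω)) ∂μ := by
          refine lintegral_congr fun ω => ?_
          rw [Finset.sum_Icc_succ_top (by omega), sub_eq_neg_add, ← add_assoc,
            ENNReal.ofReal_exp_add, ENNReal.ofReal_exp_add]
      _ ≤ ∫⁻ ω, G ω * ENNReal.ofReal (Real.exp (σ ^ 2 * g (n + 1) ω ^ 2 / 2)) ∂μ :=
          lintegral_mul_exp_mul_le_of_condExp_le (F.le (n + 1))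
            ((hW (n + 1)).mono (F.le _)).measurable (hint (n + 1)) (hsub (n + 1)) hG
            (hg (n + 1))
      _ = ∫⁻ ω, ENNReal.ofReal (Real.exp (S ω)) ∂μ := by
          refine lintegral_congr fun ω => ?_
          rw [mul_assoc, ← ENNReal.ofReal_exp_add, neg_add_cancel, Real.exp_zero,
            ENNReal.ofReal_one, mul_one]
      _ ≤ 1 := ih

theorem measureReal_le_exp_neg_of_lintegral_exp_le_one {Ω : Type*} {m0 : MeasurableSpace Ω}
    {μ : Measure Ω} {X : Ω → ℝ} (hX : Measurable X)
    (hX1 : ∫⁻ ω, ENNReal.ofReal (Real.exp (X ω)) ∂μ ≤ 1) {a : ℝ} {s : Set Ω}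
    (hs : ∀ ω ∈ s, a ≤ X ω) : μ.real s ≤ Real.exp (-a) := by
  have hmarkov : ENNReal.ofReal (Real.exp a) * μ s ≤ 1 :=
    calc ENNReal.ofReal (Real.exp a) * μ s
        ≤ ENNReal.ofReal (Real.exp a) *
            μ {ω | ENNReal.ofReal (Real.exp a) ≤ ENNReal.ofReal (Real.exp (X ω))} := by
          gcongr
          intro ω hω
          exact ENNReal.ofReal_le_ofReal (Real.exp_le_exp.2 (hs ω hω))
      _ ≤ ∫⁻ ω, ENNReal.ofReal (Real.exp (X ω)) ∂μ :=
          mul_meas_ge_le_lintegral₀ (by fun_prop) _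
      _ ≤ 1 := hX1
  have := ENNReal.toReal_mono ENNReal.one_ne_top hmarkov
  rw [ENNReal.toReal_mul, ENNReal.toReal_ofReal (Real.exp_pos a).le, ENNReal.toReal_one] at this
  rw [Real.exp_neg, measureReal_def, ← one_div, le_div_iff₀ (Real.exp_pos a), mul_comm]
  exact this

theorem sq_div_le_mul_sub_of_le {σ α β S V : ℝ} (hσ : σ ≠ 0) (hα : 0 ≤ α) (hβ : 0 < β)
    (hS : α ≤ S) (hV : V ≤ β) :
    α ^ 2 / (2 * σ ^ 2 * β) ≤
      α / (σ ^ 2 * β) * S - σ ^ 2 * (α / (σ ^ 2 * β)) ^ 2 * V / 2 := by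
  calc α ^ 2 / (2 * σ ^ 2 * β)
      = α / (σ ^ 2 * β) * α - σ ^ 2 * (α / (σ ^ 2 * β)) ^ 2 * β / 2 := by
        field_simp
        ring
    _ ≤ α / (σ ^ 2 * β) * S - σ ^ 2 * (α / (σ ^ 2 * β)) ^ 2 * V / 2 := by
        gcongr

theorem stmt_13_general {Ω : Type*} {m0 : MeasurableSpace Ω} (μ : Measure Ω)
    [IsProbabilityMeasure μ] (F : Filtration ℕ m0)
    (Z W : ℕ → Ω → ℝ)
    (hZ : Adapted F Z)
    (hW : ∀ t, StronglyMeasurable[F (t + 1)] (W t))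
    (σ : ℝ) (hσ : 0 < σ)
    (hint : ∀ t (lam : ℝ), Integrable (fun ω => Real.exp (lam * W t ω)) μ)
    (hsubG : ∀ t (lam : ℝ),
      μ[fun ω => Real.exp (lam * W t ω)|F t] ≤ᵐ[μ]
        fun _ => Real.exp (σ ^ 2 * lam ^ 2 / 2))
    (T : ℕ) (α β : ℝ) (hα : 0 < α) (hβ : 0 < β) :
    (μ ({ω | α ≤ ∑ t ∈ Finset.Icc 1 T, Z t ω * W t ω} ∩
        {ω | ∑ t ∈ Finset.Icc 1 T, (Z t ω) ^ 2 ≤ β})).toReal ≤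
      Real.exp (-α ^ 2 / (2 * σ ^ 2 * β)) := by
  set lam := α / (σ ^ 2 * β)
  have hsupermart := lintegral_exp_sum_mul_sub_le_one (g := fun t ω => lam * Z t ω) F
    (fun t => (hZ t).const_mul lam) hW hint hsubG T
  have hmeas : Measurable fun ω => ∑ t ∈ Finset.Icc 1 T,
      (lam * Z t ω * W t ω - σ ^ 2 * (lam * Z t ω) ^ 2 / 2) :=
    Finset.measurable_sum _ fun t _ => by
      have := (hZ t).mono (F.le t) le_rfl
      have := ((hW t).mono (F.le (t + 1))).measurable
      fun_prop
  rw [neg_div]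
  refine measureReal_le_exp_neg_of_lintegral_exp_le_one hmeas hsupermart
    fun ω ⟨hS, hV⟩ => ?_
  refine (sq_div_le_mul_sub_of_le hσ.ne' hα.le hβ hS hV).trans_eq ?_
  rw [Finset.mul_sum, Finset.mul_sum, Finset.sum_div, ← Finset.sum_sub_distrib]
  congr 1 with t
  ring

theorem stmt_13 {Ω : Type*} {m0 : MeasurableSpace Ω} (μ : Measure Ω)
    [IsProbabilityMeasure μ] (F : Filtration ℕ m0)
    (Z W : ℕ → Ω → ℝ)
    (hZ : Adapted F Z)
    (hW : ∀ t, StronglyMeasurable[F (t + 1)] (W t))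
    (σ : ℝ) (hσ : 0 < σ)
    (hint : ∀ t (lam : ℝ), Integrable (fun ω => Real.exp (lam * W t ω)) μ)
    (hmean : ∀ t, μ[W t|F t] =ᵐ[μ] 0)
    (hsubG : ∀ t (lam : ℝ),
      μ[fun ω => Real.exp (lam * W t ω)|F t] ≤ᵐ[μ]
        fun _ => Real.exp (σ ^ 2 * lam ^ 2 / 2))
    (T : ℕ) (α β : ℝ) (hα : 0 < α) (hβ : 0 < β) :
    (μ ({ω | α ≤ ∑ t ∈ Finset.Icc 1 T, Z t ω * W t ω} ∩
        {ω | ∑ t ∈ Finset.Icc 1 T, (Z t ω) ^ 2 ≤ β})).toReal ≤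
      Real.exp (-α ^ 2 / (2 * σ ^ 2 * β)) :=
  stmt_13_general μ F Z W hZ hW σ hσ hint hsubG T α β hα hβ
end

section
/- Let (Z_t)_{t≥1} be a real-valued process adapted to a filtration {F_t} satisfying the (k, ν, p)-block martingale small-ball condition: for every j ≥ 0, (1/k)Σ_{i=1}^k P(|Z_{j+i}| ≥ ν | F_j) ≥ p almost surely. Then P[Σ_{t=1}^T Z_t² ≤ (ν²p²/8)·k·⌊T/k⌋] ≤ exp(−⌊T/k⌋ p²/8). -/
/-!
Cut `[1, T]` into `n = ⌊T/k⌋` blocks of length `k` and let `B_j` indicate that the `j`-th block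
carries energy `∑ Z² ≥ ν²pk/2`. Pointwise, `∑_{i ≤ k} 1{|Z_{jk+i}| ≥ ν} ≤ pk/2 + k B_j`, so
conditioning on `F_{jk}` and using the small-ball condition gives `P(B_j = 1 | F_{jk}) ≥ p/2`.
On the event of the theorem at most `pn/4` of the blocks are energetic. A conditional Chernoff
bound with exponent `log 3`, for which `E[3^{-B_j} | F_{jk}] ≤ 1 - p/3`, bounds its probability by
`(3^{p/4} (1 - p/3))^n`, and `3^{p/4} (1 - p/3) ≤ exp(-p²/8)` on `[0, 1]` follows from
`-log (1 - x) ≥ x + x²/2 + x³/3` and `log 3 < 1.0986122888`.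
-/

open MeasureTheory ProbabilityTheory Real Finset

theorem Real.exp_log_three_mul_mul_one_sub_div_three_le {p : ℝ} (hp0 : 0 ≤ p) (hp1 : p ≤ 1) :
    exp (log 3 * (p / 4)) * (1 - p / 3) ≤ exp (-(p ^ 2 / 8)) := by
  have hx : |p / 3| < 1 := by rw [abs_of_nonneg (by positivity)]; linarith
  have hseries : ∑ i ∈ range 3, (p / 3) ^ (i + 1) / (i + 1) ≤ -log (1 - p / 3) :=
    sum_le_hasSum _ (fun i _ => by positivity) (hasSum_pow_div_log_of_abs_lt_one hx)
  simp only [sum_range_succ, range_zero, sum_empty] at hseries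
  norm_num at hseries
  rw [← exp_log (show 0 < 1 - p / 3 by linarith), ← exp_add, exp_le_exp]
  nlinarith [log_three_lt_d9, mul_nonneg hp0 (sub_nonneg.2 hp1)]

theorem sum_Icc_mul_eq_sum_range_sum_Icc (f : ℕ → ℝ) (n k : ℕ) :
    ∑ t ∈ Icc 1 (n * k), f t = ∑ j ∈ range n, ∑ i ∈ Icc 1 k, f (j * k + i) := by
  induction n with
  | zero => simp
  | succ n ih =>
    have hsplit := sum_Ioc_consecutive f (Nat.zero_le (n * k)) (Nat.le_add_right (n * k) k)
    have hshift : Ioc (n * k) (n * k + k) = (Ioc 0 k).map (addLeftEmbedding (n * k)) := by simp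
    simp only [← Icc_add_one_left_eq_Ioc, zero_add] at hsplit hshift
    rw [sum_range_succ, ← ih, add_mul, one_mul, ← hsplit, hshift, sum_map]
    rfl

theorem mul_sum_indicator_blocks_le {Ω : Type*} (Z : ℕ → Ω → ℝ) (c : ℝ) {n k T : ℕ}
    (hT : n * k ≤ T) (ω : Ω) :
    c * ∑ j ∈ range n,
        {ω' | c ≤ ∑ i ∈ Icc 1 k, Z (j * k + i) ω' ^ 2}.indicator (fun _ => (1 : ℝ)) ω ≤
      ∑ t ∈ Icc 1 T, Z t ω ^ 2 :=
  calc _ ≤ ∑ j ∈ range n, ∑ i ∈ Icc 1 k, Z (j * k + i) ω ^ 2 := by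
        rw [mul_sum]
        refine sum_le_sum fun j _ => ?_
        rw [Set.indicator_apply]
        split_ifs with h
        · rwa [mul_one]
        · rw [mul_zero]
          exact sum_nonneg fun i _ => sq_nonneg _
    _ = ∑ t ∈ Icc 1 (n * k), Z t ω ^ 2 :=
        (sum_Icc_mul_eq_sum_range_sum_Icc (fun t => Z t ω ^ 2) n k).symm
    _ ≤ _ := sum_le_sum_of_subset_of_nonneg (Icc_subset_Icc_right hT) fun _ _ _ => sq_nonneg _

theorem sum_indicator_le_add_card_mul_indicator {Ω ι : Type*} (s : Finset ι) (W : ι → Ω → ℝ)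
    {ν a : ℝ} (hν : 0 < ν) (ha : 0 ≤ a) (ω : Ω) :
    ∑ i ∈ s, {ω' | ν ≤ |W i ω'|}.indicator (fun _ => (1 : ℝ)) ω ≤
      a + #s * {ω' | ν ^ 2 * a ≤ ∑ i ∈ s, W i ω' ^ 2}.indicator (fun _ => (1 : ℝ)) ω := by
  rw [Set.indicator_apply]
  split_ifs with hlarge
  · have hcount := sum_le_card_nsmul s _ (1 : ℝ) fun i _ =>
      Set.indicator_le_self' (s := {ω' | ν ≤ |W i ω'|}) (fun _ _ => zero_le_one) ω
    rw [nsmul_one] at hcount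
    linarith
  · have hmarkov : ν ^ 2 * ∑ i ∈ s, {ω' | ν ≤ |W i ω'|}.indicator (fun _ => (1 : ℝ)) ω ≤
        ∑ i ∈ s, W i ω ^ 2 := by
      rw [mul_sum]
      refine sum_le_sum fun i _ => ?_
      rw [Set.indicator_apply]
      split_ifs with hi
      · rw [mul_one]
        exact (pow_le_pow_left₀ hν.le hi 2).trans_eq (sq_abs _)
      · rw [mul_zero]
        positivity
    have hsmall : ∑ i ∈ s, W i ω ^ 2 < ν ^ 2 * a := not_le.1 hlarge
    rw [mul_zero, add_zero]
    by_contra! hgt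
    nlinarith [mul_le_mul_of_nonneg_left hgt.le (sq_nonneg ν), pow_pos hν 2]

theorem condExp_const_add_const_mul {Ω : Type*} {m m0 : MeasurableSpace Ω} {μ : Measure Ω}
    [IsFiniteMeasure μ] (hm : m ≤ m0) {f : Ω → ℝ} (hf : Integrable f μ) (a b : ℝ) :
    μ[fun ω => a + b * f ω|m] =ᵐ[μ] fun ω => a + b * μ[f|m] ω := by
  have hadd := condExp_add (integrable_const a) (hf.smul b) m
  rw [show (fun ω => a + b * f ω) = (fun _ => a) + b • f from rfl]
  filter_upwards [hadd, condExp_smul b f m] with ω hadd hsmul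
  simpa [condExp_const hm, hsmul] using hadd

theorem ae_half_le_condExp_indicator_sum_sq {Ω ι : Type*} {m m0 : MeasurableSpace Ω}
    {μ : Measure Ω} [IsProbabilityMeasure μ] (hm : m ≤ m0) {s : Finset ι} (hs : s.Nonempty)
    {W : ι → Ω → ℝ} (hW : ∀ i, Measurable (W i)) {ν p : ℝ} (hν : 0 < ν) (hp : 0 ≤ p)
    (hsmall : ∀ᵐ ω ∂μ,
      p * #s ≤ ∑ i ∈ s, μ[{ω' | ν ≤ |W i ω'|}.indicator (fun _ => (1 : ℝ))|m] ω) :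
    ∀ᵐ ω ∂μ, p / 2 ≤
      μ[{ω' | ν ^ 2 * (p * #s / 2) ≤ ∑ i ∈ s, W i ω' ^ 2}.indicator (fun _ => (1 : ℝ))|m] ω := by
  set M := {ω' | ν ^ 2 * (p * #s / 2) ≤ ∑ i ∈ s, W i ω' ^ 2}
  set I : ι → Ω → ℝ := fun i => {ω' | ν ≤ |W i ω'|}.indicator (fun _ => (1 : ℝ))
  have hI : ∀ i, Integrable (I i) μ := fun i =>
    (integrable_const 1).indicator (measurableSet_le measurable_const (hW i).abs)
  have hM : Integrable (M.indicator (fun _ => (1 : ℝ))) μ :=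
    (integrable_const 1).indicator
      (measurableSet_le measurable_const (Finset.measurable_sum _ fun i _ => (hW i).pow_const 2))
  have hsum : μ[fun ω => ∑ i ∈ s, I i ω|m] =ᵐ[μ] fun ω => ∑ i ∈ s, μ[I i|m] ω := by
    simpa only [← Finset.sum_fn, Finset.sum_apply] using condExp_finsetSum (fun i _ => hI i) m
  have hmono := condExp_mono (m := m)
    (g := fun ω => p * #s / 2 + #s * M.indicator (fun _ => 1) ω)
    (integrable_finsetSum s fun i _ => hI i) ((integrable_const _).add (hM.const_mul _))
    (ae_of_all μ (sum_indicator_le_add_card_mul_indicator s W hν (by positivity)))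
  have hcard : (0 : ℝ) < #s := by exact_mod_cast hs.card_pos
  filter_upwards [hsmall, hsum, hmono, condExp_const_add_const_mul hm hM (p * #s / 2) #s]
    with ω hsmall hsum hmono haff
  rw [hsum, haff] at hmono
  nlinarith

section Chernoff

variable {Ω : Type*} {m0 : MeasurableSpace Ω} {μ : Measure Ω} [IsProbabilityMeasure μ]

theorem integral_prod_le_pow_of_condExp_le (G : Filtration ℕ m0) {X : ℕ → Ω → ℝ}
    (hX : ∀ j, StronglyMeasurable[G (j + 1)] (X j)) (hX0 : ∀ j ω, 0 ≤ X j ω)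
    (hX1 : ∀ j ω, X j ω ≤ 1) {c : ℝ} (hc : 0 ≤ c) (hcond : ∀ j, ∀ᵐ ω ∂μ, μ[X j|G j] ω ≤ c)
    (n : ℕ) : ∫ ω, ∏ j ∈ range n, X j ω ∂μ ≤ c ^ n := by
  set P : ℕ → Ω → ℝ := fun n ω => ∏ j ∈ range n, X j ω
  have hP0 : ∀ n ω, 0 ≤ P n ω := fun n ω => prod_nonneg fun j _ => hX0 j ω
  have hPm : ∀ n, StronglyMeasurable[G n] (P n) := fun n =>
    Finset.stronglyMeasurable_fun_prod _ fun j hj => (hX j).mono (G.mono (mem_range.1 hj))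
  have hPint : ∀ n, Integrable (P n) μ := fun n =>
    (integrable_const 1).mono' ((hPm n).mono (G.le n)).aestronglyMeasurable
      (ae_of_all μ fun ω => (norm_of_nonneg (hP0 n ω)).trans_le
        (prod_le_one (fun j _ => hX0 j ω) fun j _ => hX1 j ω))
  have hXint : ∀ j, Integrable (X j) μ := fun j =>
    (integrable_const 1).mono' ((hX j).mono (G.le _)).aestronglyMeasurable
      (ae_of_all μ fun ω => (norm_of_nonneg (hX0 j ω)).trans_le (hX1 j ω))
  induction n with
  | zero => simp
  | succ n ih =>
    have hsucc : P (n + 1) = P n * X n := funext fun ω => prod_range_succ _ _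
    have hpull : μ[P n * X n|G n] =ᵐ[μ] P n * μ[X n|G n] :=
      condExp_mul_of_stronglyMeasurable_left (hPm n) (hsucc ▸ hPint (n + 1)) (hXint n)
    calc ∫ ω, P (n + 1) ω ∂μ = ∫ ω, μ[P n * X n|G n] ω ∂μ := by
          rw [integral_condExp (G.le n), hsucc]
      _ = ∫ ω, P n ω * μ[X n|G n] ω ∂μ := integral_congr_ae hpull
      _ ≤ ∫ ω, c * P n ω ∂μ := by
          refine integral_mono_ae (integrable_condExp.congr hpull) ((hPint n).const_mul c) ?_
          filter_upwards [hcond n] with ω hω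
          rw [mul_comm c]
          exact mul_le_mul_of_nonneg_left hω (hP0 n ω)
      _ = c * ∫ ω, P n ω ∂μ := integral_const_mul c _
      _ ≤ c ^ (n + 1) := by
          rw [pow_succ']
          gcongr

theorem measureReal_sum_indicator_le_le (G : Filtration ℕ m0) {A : ℕ → Set Ω}
    (hA : ∀ j, MeasurableSet[G (j + 1)] (A j)) {q : ℝ} (hq : q ≤ 1)
    (hcond : ∀ j, ∀ᵐ ω ∂μ, q ≤ μ[(A j).indicator (fun _ => (1 : ℝ))|G j] ω)
    {t : ℝ} (ht : 0 ≤ t) (n : ℕ) (a : ℝ) :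
    μ.real {ω | ∑ j ∈ range n, (A j).indicator (fun _ => (1 : ℝ)) ω ≤ a} ≤
      exp (t * a) * (1 - (1 - exp (-t)) * q) ^ n := by
  set B : ℕ → Ω → ℝ := fun j => (A j).indicator (fun _ => 1)
  have hB : ∀ j, Measurable[G (j + 1)] (B j) := fun j => measurable_const.indicator (hA j)
  have hB0 : ∀ j ω, 0 ≤ B j ω := fun j => Set.indicator_nonneg fun _ _ => zero_le_one
  have hexp_le_one : ∀ {x : ℝ}, 0 ≤ x → exp (-t * x) ≤ 1 := fun hx =>
    exp_le_one_iff.2 (mul_nonpos_of_nonpos_of_nonneg (neg_nonpos.2 ht) hx)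
  have hexpB : ∀ j ω, exp (-t * B j ω) = 1 + -(1 - exp (-t)) * B j ω := by
    intro j ω
    by_cases h : ω ∈ A j <;> simp [B, h]
  have hdecay : 0 ≤ 1 - exp (-t) := sub_nonneg.2 (exp_le_one_iff.2 (neg_nonpos.2 ht))
  have hcondX : ∀ j, ∀ᵐ ω ∂μ,
      μ[fun ω => exp (-t * B j ω)|G j] ω ≤ 1 - (1 - exp (-t)) * q := by
    intro j
    have hBint : Integrable (B j) μ := (integrable_const 1).indicator (G.le _ _ (hA j))
    simp_rw [hexpB]
    filter_upwards [condExp_const_add_const_mul (G.le j) hBint 1 (-(1 - exp (-t))), hcond j]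
      with ω haff hq
    rw [haff]
    nlinarith
  have hint : Integrable (fun ω => exp (-t * ∑ j ∈ range n, B j ω)) μ := by
    refine (integrable_const (1 : ℝ)).mono' ?_ (ae_of_all μ fun ω => ?_)
    · exact (measurable_const.mul (Finset.measurable_sum _ fun j _ =>
        (hB j).mono (G.le _) le_rfl)).exp.aestronglyMeasurable
    · rw [norm_of_nonneg (exp_pos _).le]
      exact hexp_le_one (sum_nonneg fun j _ => hB0 j ω)
  have hmgf : mgf (fun ω => ∑ j ∈ range n, B j ω) μ (-t) =
      ∫ ω, ∏ j ∈ range n, exp (-t * B j ω) ∂μ := by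
    simp_rw [mgf, mul_sum, exp_sum]
  have hprod := integral_prod_le_pow_of_condExp_le G (X := fun j ω => exp (-t * B j ω))
    (fun j => ((hB j).const_mul (-t)).exp.stronglyMeasurable) (fun j ω => (exp_pos _).le)
    (fun j ω => hexp_le_one (hB0 j ω))
    (by nlinarith [exp_pos (-t), mul_nonneg hdecay (sub_nonneg.2 hq)]) hcondX n
  calc μ.real {ω | ∑ j ∈ range n, B j ω ≤ a}
      ≤ exp (-(-t) * a) * mgf (fun ω => ∑ j ∈ range n, B j ω) μ (-t) :=
        measure_le_le_exp_mul_mgf a (neg_nonpos.2 ht) hint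
    _ ≤ exp (t * a) * (1 - (1 - exp (-t)) * q) ^ n := by
        rw [neg_neg, hmgf]
        gcongr

end Chernoff

def MeasureTheory.Filtration.atMultiples {Ω : Type*} {m0 : MeasurableSpace Ω}
    (F : Filtration ℕ m0) (k : ℕ) : Filtration ℕ m0 where
  seq j := F (j * k)
  mono' _ _ hij := F.mono (Nat.mul_le_mul_right k hij)
  le' j := F.le (j * k)

theorem stmt_15 {Ω : Type*} {m0 : MeasurableSpace Ω} (μ : Measure Ω)
    [IsProbabilityMeasure μ] (F : Filtration ℕ m0)
    (Z : ℕ → Ω → ℝ) (hZ : StronglyAdapted F Z)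
    (k : ℕ) (hk : 0 < k) (ν p : ℝ) (hν : 0 < ν) (hp0 : 0 < p) (hp1 : p ≤ 1)
    (hbmsb : ∀ j : ℕ, ∀ᵐ ω ∂μ,
      p ≤ (1 / (k : ℝ)) * ∑ i ∈ Finset.Icc 1 k,
        (μ[Set.indicator {ω' | ν ≤ |Z (j + i) ω'|} (fun _ => (1 : ℝ))|F j]) ω)
    (T : ℕ) :
    (μ {ω | ∑ t ∈ Finset.Icc 1 T, (Z t ω) ^ 2 ≤
        ν ^ 2 * p ^ 2 / 8 * (k * (T / k : ℕ))}).toReal ≤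
      Real.exp (-((T / k : ℕ) : ℝ) * p ^ 2 / 8) := by
  set n := T / k
  set G := F.atMultiples k
  set A : ℕ → Set Ω := fun j => {ω | ν ^ 2 * (p * k / 2) ≤ ∑ i ∈ Icc 1 k, Z (j * k + i) ω ^ 2}
  have hk' : (0 : ℝ) < k := by exact_mod_cast hk
  have hA : ∀ j, MeasurableSet[G (j + 1)] (A j) := fun j =>
    measurableSet_le measurable_const <| Finset.measurable_sum _ fun i hi =>
      (((hZ _).mono (F.mono (by simp only [mem_Icc] at hi; nlinarith))).measurable.pow_const 2)
  have hcond : ∀ j, ∀ᵐ ω ∂μ, p / 2 ≤ μ[(A j).indicator (fun _ => (1 : ℝ))|G j] ω := by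
    intro j
    have hsmall : ∀ᵐ ω ∂μ, p * #(Icc 1 k) ≤ ∑ i ∈ Icc 1 k,
        μ[{ω' | ν ≤ |Z (j * k + i) ω'|}.indicator (fun _ => (1 : ℝ))|F (j * k)] ω := by
      filter_upwards [hbmsb (j * k)] with ω h
      rwa [Nat.card_Icc, add_tsub_cancel_right, ← le_div_iff₀ hk', div_eq_inv_mul, ← one_div]
    have hblock := ae_half_le_condExp_indicator_sum_sq (F.le (j * k)) (nonempty_Icc.2 hk)
      (fun i => ((hZ (j * k + i)).mono (F.le _)).measurable) hν hp0.le hsmall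
    rwa [Nat.card_Icc, add_tsub_cancel_right] at hblock
  have hevent : {ω | ∑ t ∈ Icc 1 T, Z t ω ^ 2 ≤ ν ^ 2 * p ^ 2 / 8 * (k * n)} ⊆
      {ω | ∑ j ∈ range n, (A j).indicator (fun _ => (1 : ℝ)) ω ≤ p * n / 4} := fun ω hω =>
    le_of_mul_le_mul_left ((mul_sum_indicator_blocks_le Z _ (Nat.div_mul_le_self T k) ω).trans
      (hω.trans_eq (by ring))) (by positivity)
  calc μ.real _ ≤ μ.real _ := measureReal_mono hevent
    _ ≤ exp (log 3 * (p * n / 4)) * (1 - (1 - exp (-log 3)) * (p / 2)) ^ n :=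
      measureReal_sum_indicator_le_le G hA (by linarith) hcond (log_nonneg (by norm_num)) n _
    _ = (exp (log 3 * (p / 4)) * (1 - p / 3)) ^ n := by
      rw [exp_neg, exp_log (by norm_num), mul_pow, ← exp_nat_mul]
      ring_nf
    _ ≤ exp (-(p ^ 2 / 8)) ^ n :=
      pow_le_pow_left₀ (mul_nonneg (exp_pos _).le (by linarith))
        (exp_log_three_mul_mul_one_sub_div_three_le hp0.le hp1) n
    _ = exp (-(n : ℝ) * p ^ 2 / 8) := by
      rw [← exp_nat_mul]
      ring_nf
end
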